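/- Over F₂, let M be the (regions × crossings) incidence matrix of a reduced knot diagram D. Then the rank of M is exactly c(D), i.e., the region incidence vectors span F₂^{c(D)}. -/

import Mathlib

/-!
A knot diagram is modelled faithfully by a rotation system.  A *dart* is a
pair `(v, i)`: the `i`-th edge-end (in counterclockwise cyclic order) at the
crossing `v`.  The fixed-point-free involution `α` pairs the two ends of each
edge of the underlying 4-valent graph; `opp` sends a dart to the opposite dart
at the same crossing (continuing along the same strand).  The diagram is a
*knot* diagram when the relation generated by `α` and `opp` relates all darts
(the underlying curve has a single component), and it is *planar* (lies on
`S²`) when Euler's formula holds: the face permutation `α.trans rot` has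
exactly `n + 2` orbits.  Regions are the orbits of the face permutation, and
`M R c` is the parity of the number of corners (darts) of the region `R` at
the crossing `c`.  Region crossing changes at a finite set `P` of regions add
`∑_{R ∈ P} M R ·` to the over/under vector in `F₂ = ZMod 2`.
-/

open Equiv

abbrev Dart (n : ℕ) := Fin n × Fin 4

/-- the rotation of darts around a crossing -/
def rot (n : ℕ) : Equiv.Perm (Dart n) :=
  (Equiv.refl (Fin n)).prodCongr (Equiv.addRight (1 : Fin 4))

/-- the opposite dart at the same crossing (same strand) -/
def opp (n : ℕ) : Equiv.Perm (Dart n) :=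
  (Equiv.refl (Fin n)).prodCongr (Equiv.addRight (2 : Fin 4))

/-- the setoid whose classes are the cycles (orbits) of a permutation -/
def cycleSetoid {β : Type*} (f : Equiv.Perm β) : Setoid β :=
  ⟨f.SameCycle, ⟨fun _ => Equiv.Perm.SameCycle.refl f _,
    Equiv.Perm.SameCycle.symm, Equiv.Perm.SameCycle.trans⟩⟩

/-- a knot diagram with `n` crossings, encoded by a rotation system -/
structure KnotDiagram (n : ℕ) where
  pos : 0 < n
  /-- the fixed-point-free involution pairing the two ends of each edge -/
  α : Equiv.Perm (Dart n)
  invol : ∀ d, α (α d) = d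
  no_fix : ∀ d, α d ≠ d
  /-- the underlying curve has a single component (it is a knot diagram) -/
  oneComponent : ∀ d d' : Dart n,
    Relation.EqvGen (fun x y => y = α x ∨ y = opp n x) d d'
  /-- planarity via Euler's formula: the face permutation has `n + 2` orbits -/
  planar : Nat.card (Quotient (cycleSetoid (α.trans (rot n)))) = n + 2

/-- the regions (faces) of a knot diagram -/
def KnotDiagram.Region {n : ℕ} (D : KnotDiagram n) : Type :=
  Quotient (cycleSetoid (D.α.trans (rot n)))

/-- the region in whose boundary a given dart (corner) lies -/
def KnotDiagram.regionOf {n : ℕ} (D : KnotDiagram n) (d : Dart n) : D.Region :=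
  Quotient.mk _ d

/-- the region-crossing incidence matrix over `F₂`: the parity of the number
of corners of region `R` at crossing `c` -/
noncomputable def KnotDiagram.M {n : ℕ} (D : KnotDiagram n) (R : D.Region) (c : Fin n) :
    ZMod 2 :=
  (Nat.card {i : Fin 4 // D.regionOf (c, i) = R} : ZMod 2)

/-- the effect of region crossing changes at a set `P` of regions on the
crossing `c` -/
noncomputable def KnotDiagram.effect {n : ℕ} (D : KnotDiagram n) (P : Finset D.Region)
    (c : Fin n) : ZMod 2 :=
  ∑ R ∈ P, D.M R c

noncomputable instance {n : ℕ} (D : KnotDiagram n) : Fintype D.Region :=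
  @Fintype.ofFinite _ (Quotient.finite _)

/-- `D` is reduced: at every crossing the two pairs of opposite corners lie in
distinct regions. -/
def KnotDiagram.Reduced {n : ℕ} (D : KnotDiagram n) : Prop :=
  ∀ c : Fin n, D.regionOf (c, 0) ≠ D.regionOf (c, 2) ∧
    D.regionOf (c, 1) ≠ D.regionOf (c, 3)

/-!
Let `T y c` be the sum of `y : Region → 𝔽₂` over the four corners at the crossing `c`, i.e. the
combination of the incidence rows with coefficients `y`. By Euler's formula there are `n + 2`
regions, so it suffices that `ker T` has dimension at most `2`. For `y ∈ ker T` the function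
`g d = y (regionOf d) + y (regionOf (rot d))`, a sum over the two sides of an edge, is invariant
under `α`, which swaps the two sides, and under `opp`, because the four corners at a crossing sum
to zero; so `g` is constant on the single component of the knot. If this constant vanishes,
`y ∘ regionOf` is invariant under `rot` and `α`, hence constant as well. Thus `y` is determined by
its values at two adjacent corners.
-/

@[simp] lemma rot_apply {n : ℕ} (v : Fin n) (i : Fin 4) : rot n (v, i) = (v, i + 1) := rfl

@[simp] lemma opp_apply {n : ℕ} (v : Fin n) (i : Fin 4) : opp n (v, i) = (v, i + 2) := rfl

lemma opp_eq_rot_rot {n : ℕ} (d : Dart n) : opp n d = rot n (rot n d) := by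
  obtain ⟨v, i⟩ := d
  simp only [opp_apply, rot_apply, add_assoc]
  rfl

namespace KnotDiagram

variable {n : ℕ} (D : KnotDiagram n)

lemma regionOf_rot_α (d : Dart n) : D.regionOf (rot n (D.α d)) = D.regionOf d :=
  Quotient.sound (Equiv.Perm.SameCycle.symm ⟨1, rfl⟩)

lemma regionOf_α (d : Dart n) : D.regionOf (D.α d) = D.regionOf (rot n d) := by
  simpa only [D.invol] using (D.regionOf_rot_α (D.α d)).symm

lemma apply_eq_of_invariant {β : Type*} (g : Dart n → β) (hα : ∀ d, g (D.α d) = g d)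
    (hopp : ∀ d, g (opp n d) = g d) (d d' : Dart n) : g d = g d' := by
  induction D.oneComponent d d' with
  | rel a b hab => rcases hab with rfl | rfl <;> simp [hα, hopp]
  | refl => rfl
  | symm _ _ _ ih => exact ih.symm
  | trans _ _ _ _ _ ih₁ ih₂ => exact ih₁.trans ih₂

noncomputable def incidence : (D.Region → ZMod 2) →ₗ[ZMod 2] Fin n → ZMod 2 :=
  Fintype.linearCombination (ZMod 2) fun R c => D.M R c

lemma incidence_apply (y : D.Region → ZMod 2) (c : Fin n) :
    D.incidence y c = ∑ i : Fin 4, y (D.regionOf (c, i)) := by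
  classical
  rw [← Finset.sum_fiberwise Finset.univ (fun i => D.regionOf (c, i))]
  simp only [incidence, Fintype.linearCombination_apply, Finset.sum_apply, Pi.smul_apply,
    smul_eq_mul, KnotDiagram.M, Nat.card_eq_fintype_card, Fintype.card_subtype]
  refine Finset.sum_congr rfl fun R _ => ?_
  rw [Finset.sum_congr rfl fun i hi => by rw [(Finset.mem_filter.1 hi).2], Finset.sum_const,
    nsmul_eq_mul, mul_comm]

lemma add_rot_eq_of_incidence_eq_zero {y : D.Region → ZMod 2} (hy : D.incidence y = 0)
    (d d' : Dart n) :
    y (D.regionOf d) + y (D.regionOf (rot n d)) = y (D.regionOf d') + y (D.regionOf (rot n d')) := by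
  refine D.apply_eq_of_invariant (fun d => y (D.regionOf d) + y (D.regionOf (rot n d))) ?_ ?_ d d'
  · intro d
    simp only [regionOf_α, regionOf_rot_α, add_comm]
  · rintro ⟨v, i⟩
    have hv := congrFun hy v
    rw [incidence_apply, Fin.sum_univ_four, Pi.zero_apply] at hv
    simp only [opp_apply, rot_apply]
    fin_cases i <;> grind

lemma eq_zero_of_incidence_eq_zero {y : D.Region → ZMod 2} (hy : D.incidence y = 0)
    (d : Dart n) (h₀ : y (D.regionOf d) = 0) (h₁ : y (D.regionOf (rot n d)) = 0) : y = 0 := by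
  have hrot (d' : Dart n) : y (D.regionOf (rot n d')) = y (D.regionOf d') := by
    have := D.add_rot_eq_of_incidence_eq_zero hy d' d
    rwa [h₀, h₁, add_zero, CharTwo.add_eq_zero, eq_comm] at this
  have hconst := D.apply_eq_of_invariant (fun d' => y (D.regionOf d'))
    (fun d' => by simp only [regionOf_α, hrot]) (fun d' => by simp only [opp_eq_rot_rot, hrot])
  funext R
  obtain ⟨d', rfl⟩ := Quotient.exists_rep R
  exact (hconst d' d).trans h₀

lemma finrank_ker_incidence_le : Module.finrank (ZMod 2) (LinearMap.ker D.incidence) ≤ 2 := by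
  let d : Dart n := (⟨0, D.pos⟩, 0)
  let ev : (D.Region → ZMod 2) →ₗ[ZMod 2] ZMod 2 × ZMod 2 :=
    (LinearMap.proj (D.regionOf d)).prod (LinearMap.proj (D.regionOf (rot n d)))
  have hinj : Function.Injective (ev ∘ₗ (LinearMap.ker D.incidence).subtype) := by
    rw [← LinearMap.ker_eq_bot, LinearMap.ker_eq_bot']
    rintro ⟨y, hy⟩ hev
    exact Subtype.ext
      (D.eq_zero_of_incidence_eq_zero hy d (congrArg Prod.fst hev) (congrArg Prod.snd hev))
  simpa using LinearMap.finrank_le_finrank_of_injective hinj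

lemma range_incidence : LinearMap.range D.incidence = ⊤ := by
  have hregions : Module.finrank (ZMod 2) (D.Region → ZMod 2) = n + 2 := by
    rw [Module.finrank_fintype_fun_eq_card, ← Nat.card_eq_fintype_card]
    exact D.planar
  have hrank := LinearMap.finrank_range_add_finrank_ker D.incidence
  have hker := D.finrank_ker_incidence_le
  have hle := Submodule.finrank_le (LinearMap.range D.incidence)
  apply Submodule.eq_top_of_finrank_eq
  rw [Module.finrank_fin_fun] at hle ⊢
  omega

end KnotDiagram

theorem incidence_matrix_rank_eq_crossing_number_general
    {n : ℕ} (D : KnotDiagram n) :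
    Submodule.span (ZMod 2)
        (Set.range fun R : D.Region => fun c : Fin n => D.M R c) = ⊤ ∧
      Module.finrank (ZMod 2)
        ↥(Submodule.span (ZMod 2)
          (Set.range fun R : D.Region => fun c : Fin n => D.M R c)) = n := by
  have hspan : Submodule.span (ZMod 2)
      (Set.range fun R : D.Region => fun c : Fin n => D.M R c) = ⊤ := by
    rw [← Fintype.range_linearCombination]
    exact D.range_incidence
  refine ⟨hspan, ?_⟩
  rw [hspan, finrank_top, Module.finrank_fin_fun]

/-- The incidence rows of a reduced knot diagram span `F₂^{c(D)}`; in
particular the incidence matrix has rank exactly `c(D)`. -/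
theorem incidence_matrix_rank_eq_crossing_number
    {n : ℕ} (D : KnotDiagram n) (hred : D.Reduced) :
    Submodule.span (ZMod 2)
        (Set.range fun R : D.Region => fun c : Fin n => D.M R c) = ⊤ ∧
      Module.finrank (ZMod 2)
        ↥(Submodule.span (ZMod 2)
          (Set.range fun R : D.Region => fun c : Fin n => D.M R c)) = n :=
  incidence_matrix_rank_eq_crossing_number_general D
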